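/- If ψ is a level-set function and there exists a constant c > 0 such that the generalized topological derivative satisfies 𝒟J(Ω_ψ)(x) = c ψ(x) for all x ∈ D, then DJ(Ω)(x) ≥ 0 for all x ∈ D \ ∂Ω, i.e., the first-order necessary optimality condition holds. -/
import Mathlib


/-- If the generalized topological derivative is a positive multiple of the level-set
function, then the first-order necessary optimality condition `DJ ≥ 0` holds on
`D \ ∂Ω`. -/
theorem stmt_8 {X : Type*} [TopologicalSpace X] (D Ω : Set X)
    (hΩopen : IsOpen Ω) (hΩD : Ω ⊆ D)
    (ψ : X → ℝ) (hcont : Continuous ψ)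
    (hneg : ∀ x ∈ Ω, ψ x < 0)
    (hpos : ∀ x ∈ D \ closure Ω, 0 < ψ x)
    (hzero : ∀ x ∈ (frontier Ω) \ (frontier D), ψ x = 0)
    (DJ : X → ℝ) (c : ℝ) (hc : 0 < c)
    (heq_in : ∀ x ∈ Ω, -DJ x = c * ψ x)
    (heq_out : ∀ x ∈ D \ closure Ω, DJ x = c * ψ x) :
    ∀ x ∈ D \ frontier Ω, 0 ≤ DJ x := by
  intro x hx
  obtain ⟨hxD, hxF⟩ := hx
  by_cases hcl : x ∈ closure Ω
  · have hxΩ : x ∈ Ω := by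
      have : x ∈ interior Ω := by
        rcases (closure_eq_interior_union_frontier Ω ▸ hcl) with h | h
        · exact h
        · exact absurd h hxF
      rwa [hΩopen.interior_eq] at this
    have h1 := heq_in x hxΩ
    have h2 := hneg x hxΩ
    nlinarith
  · have h1 := heq_out x ⟨hxD, hcl⟩
    have h2 := hpos x ⟨hxD, hcl⟩
    nlinarith
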